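/- arXiv:2510.22441 — 5 statements merged into one kernel-verified Lean document; each statement's English description precedes it below -/
import Mathlib

section
/- Let μ = (μ_n)_{n∈ℕ} be a sequence of nonnegative reals with μ_n → 0 as n → ∞ and at least one nonzero term, and set μ_* := max_n μ_n. For every σ > 0, the equation σ²(2 I_3(ε) − I_2(ε)/ε) = 1 has exactly one solution ε > 0, and this solution lies in the interval (0, μ_*). -/
open MeasureTheory ProbabilityTheory Real Set Filter Topology
open scoped ENNReal NNReal

noncomputable section

/-- The sequence space `ℓ²(ℕ)`. -/
abbrev EllTwo : Type := lp (fun _ : ℕ => ℝ) 2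

instance : Fact ((1 : ℝ≥0∞) ≤ 2) := ⟨by norm_num⟩

/-- The semi-axis-counting function `M_μ(ε) = #{n : μ_n ≥ ε}`. -/
def Mcount (μ : ℕ → ℝ) (ε : ℝ) : ℝ := ({n : ℕ | ε ≤ μ n}.ncard : ℝ)

/-- The type-`τ` integral `I_τ(ε) = ∫_ε^∞ M_μ(u) u^{-τ} du`. -/
def Itau (μ : ℕ → ℝ) (τ ε : ℝ) : ℝ := ∫ u in Set.Ioi ε, Mcount μ u / u ^ τ

/-!
Above any `ε > 0` the counting function `M_μ` is a finite step function, so the integrals are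
finite sums, and a direct computation gives
`2 I₃(ε) - I₂(ε)/ε = ∑ₙ (μₙ/ε - 1)₊ / μₙ²`.
Each summand is continuous and nonincreasing in `ε`, strictly decreasing while `ε ≤ μₙ`, and
zero once `ε ≥ μₙ`. Hence the right side is continuous, strictly decreasing on `(0, μ_*]`,
vanishes from `μ_*` on and exceeds any bound near `0`: the intermediate value theorem gives
exactly one solution, and it lies below `μ_*`.
-/

namespace CriticalRadius

def criticalTerm (a ε : ℝ) : ℝ := max (a / ε - 1) 0 / a ^ 2

lemma criticalTerm_nonneg (a ε : ℝ) : 0 ≤ criticalTerm a ε := by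
  unfold criticalTerm; positivity

lemma criticalTerm_eq_zero {a ε : ℝ} (hε : 0 < ε) (h : a ≤ ε) : criticalTerm a ε = 0 := by
  rw [criticalTerm, max_eq_right (by linarith [div_le_one_of_le₀ h hε.le]), zero_div]

lemma criticalTerm_antitoneOn (a : ℝ) : AntitoneOn (criticalTerm a) (Ioi 0) := by
  intro ε₁ h₁ ε₂ _ h₁₂
  rcases le_or_gt a ε₂ with h | h
  · rw [criticalTerm_eq_zero (lt_of_lt_of_le h₁ h₁₂) h]
    exact criticalTerm_nonneg a ε₁
  · have ha : 0 ≤ a := by linarith [h₁.out]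
    unfold criticalTerm
    gcongr

lemma criticalTerm_strictAntiOn (a : ℝ) : StrictAntiOn (criticalTerm a) (Ioc 0 a) := by
  rintro ε₁ ⟨h₁, -⟩ ε₂ ⟨-, h₂⟩ h₁₂
  have ha : 0 < a := h₁.trans_le (h₁₂.le.trans h₂)
  have hdiv : a / ε₂ < a / ε₁ := div_lt_div_of_pos_left ha h₁ h₁₂
  have hone : 1 ≤ a / ε₂ := (one_le_div (h₁.trans h₁₂)).2 h₂
  unfold criticalTerm
  rw [max_eq_left (by linarith), max_eq_left (by linarith)]
  gcongr

lemma continuousAt_criticalTerm (a : ℝ) {ε : ℝ} (hε : ε ≠ 0) :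
    ContinuousAt (criticalTerm a) ε := by
  unfold criticalTerm
  fun_prop (disch := exact hε)

def criticalFun (μ : ℕ → ℝ) (ε : ℝ) : ℝ := ∑' n, criticalTerm (μ n) ε

variable {μ : ℕ → ℝ}

lemma finite_setOf_le (hlim : Tendsto μ atTop (𝓝 0)) {ε : ℝ} (hε : 0 < ε) :
    {n | ε ≤ μ n}.Finite := by
  have h := (Nat.cofinite_eq_atTop ▸ hlim).eventually (gt_mem_nhds hε)
  simpa only [not_lt] using eventually_cofinite.1 h

lemma exists_forall_le_of_tendsto_zero (hlim : Tendsto μ atTop (𝓝 0)) {n₁ : ℕ}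
    (h₁ : 0 < μ n₁) : ∃ n₀, ∀ n, μ n ≤ μ n₀ := by
  obtain ⟨n₀, h₀, hmax⟩ := exists_max_image _ μ (finite_setOf_le hlim h₁) ⟨n₁, le_refl (μ n₁)⟩
  exact ⟨n₀, fun n => (le_total (μ n₁) (μ n)).elim (hmax n) fun h => h.trans h₀⟩

lemma criticalFun_eq_sum {ε : ℝ} (hε : 0 < ε) {S : Finset ℕ} (hS : ∀ n, ε < μ n → n ∈ S) :
    criticalFun μ ε = ∑ n ∈ S, criticalTerm (μ n) ε :=
  tsum_eq_sum fun n hn => criticalTerm_eq_zero hε (not_lt.1 (mt (hS n) hn))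

lemma summable_criticalTerm (hlim : Tendsto μ atTop (𝓝 0)) {ε : ℝ} (hε : 0 < ε) :
    Summable fun n => criticalTerm (μ n) ε :=
  summable_of_ne_finset_zero (s := (finite_setOf_le hlim hε).toFinset) fun n hn =>
    criticalTerm_eq_zero hε (le_of_lt (by simpa using hn))

lemma criticalFun_eq_zero {ε : ℝ} (hε : 0 < ε) (h : ∀ n, μ n ≤ ε) : criticalFun μ ε = 0 := by
  simp only [criticalFun, criticalTerm_eq_zero hε (h _), tsum_zero]

lemma criticalTerm_le_criticalFun (hlim : Tendsto μ atTop (𝓝 0)) {ε : ℝ} (hε : 0 < ε) (n : ℕ) :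
    criticalTerm (μ n) ε ≤ criticalFun μ ε :=
  (summable_criticalTerm hlim hε).le_tsum n fun _ _ => criticalTerm_nonneg _ _

lemma criticalFun_strictAntiOn (hlim : Tendsto μ atTop (𝓝 0)) (n₀ : ℕ) :
    StrictAntiOn (criticalFun μ) (Ioc 0 (μ n₀)) := by
  rintro ε₁ ⟨h₁, -⟩ ε₂ ⟨-, h₂⟩ h₁₂
  exact (summable_criticalTerm hlim (h₁.trans h₁₂)).tsum_lt_tsum
    (fun n => criticalTerm_antitoneOn _ h₁ (h₁.trans h₁₂) h₁₂.le)
    (criticalTerm_strictAntiOn _ ⟨h₁, h₁₂.le.trans h₂⟩ ⟨h₁.trans h₁₂, h₂⟩ h₁₂)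
    (summable_criticalTerm hlim h₁)

lemma continuousOn_criticalFun (hlim : Tendsto μ atTop (𝓝 0)) :
    ContinuousOn (criticalFun μ) (Ioi 0) := by
  intro ε hε
  have hε₂ : 0 < ε / 2 := half_pos hε
  set S := (finite_setOf_le hlim hε₂).toFinset
  have hsum : ContinuousAt (fun δ => ∑ n ∈ S, criticalTerm (μ n) δ) ε :=
    tendsto_finsetSum S fun n _ => continuousAt_criticalTerm (μ n) hε.ne'
  refine (hsum.congr ?_).continuousWithinAt
  filter_upwards [Ioi_mem_nhds (half_lt_self hε)] with δ hδ
  exact (criticalFun_eq_sum (hε₂.trans hδ) fun n hn =>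
    (Set.Finite.mem_toFinset _).2 (hδ.out.trans hn).le).symm

lemma exists_criticalFun_eq (hlim : Tendsto μ atTop (𝓝 0)) {n₀ : ℕ} (h₀ : 0 < μ n₀)
    (hmax : ∀ n, μ n ≤ μ n₀) {c : ℝ} (hc : 0 < c) :
    ∃ ε ∈ Ioo 0 (μ n₀), criticalFun μ ε = c := by
  set m := μ n₀
  -- at `ε₀` the single term of index `n₀` already equals `c`
  set ε₀ := m / (1 + c * m ^ 2)
  have hε₀ : 0 < ε₀ := by positivity
  have hε₀m : ε₀ < m := div_lt_self h₀ (by nlinarith [sq_pos_of_pos h₀])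
  have hc_le : c ≤ criticalFun μ ε₀ := by
    refine le_of_eq_of_le ?_ (criticalTerm_le_criticalFun hlim hε₀ n₀)
    rw [criticalTerm, div_div_cancel₀ h₀.ne', add_sub_cancel_left,
      max_eq_left (by positivity), mul_div_cancel_right₀ _ (by positivity)]
  have hcont : ContinuousOn (criticalFun μ) (Icc ε₀ m) :=
    (continuousOn_criticalFun hlim).mono fun x hx => hε₀.trans_le hx.1
  obtain ⟨ε, hε, hεc⟩ := intermediate_value_Icc' hε₀m.le hcont
    ⟨(criticalFun_eq_zero h₀ hmax).trans_le hc.le, hc_le⟩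
  refine ⟨ε, ⟨hε₀.trans_le hε.1, lt_of_le_of_ne hε.2 ?_⟩, hεc⟩
  rintro rfl
  exact hc.ne' ((criticalFun_eq_zero h₀ hmax).symm.trans hεc).symm

lemma Mcount_div_rpow_eq_sum_indicator {S : Finset ℕ} {ε u τ : ℝ}
    (hS : ∀ n, n ∈ S ↔ ε < μ n) (hε : 0 ≤ ε) (hu : ε < u) :
    Mcount μ u / u ^ τ = ∑ n ∈ S, (Ioc ε (μ n)).indicator (fun v => v ^ (-τ)) u := by
  classical
  have hcount : {n | u ≤ μ n} = ↑{n ∈ S | u ≤ μ n} := by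
    ext n
    simpa [hS] using fun h : u ≤ μ n => hu.trans_le h
  rw [Finset.sum_indicator_eq_sum_filter, Finset.sum_const, nsmul_eq_mul, Mcount, hcount,
    ncard_coe_finset, rpow_neg (hε.trans hu.le), div_eq_mul_inv]
  congr 3
  exact Finset.filter_congr fun n _ => by simp [hu]

lemma Itau_eq_sum {S : Finset ℕ} {ε τ : ℝ} (hS : ∀ n, n ∈ S ↔ ε < μ n) (hε : 0 < ε)
    (hτ : τ ≠ 1) : Itau μ τ ε = ∑ n ∈ S, (ε ^ (1 - τ) - μ n ^ (1 - τ)) / (τ - 1) := by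
  have hint : ∀ n ∈ S, IntegrableOn ((Ioc ε (μ n)).indicator fun v => v ^ (-τ)) (Ioi ε) := by
    intro n _
    have hcont : ContinuousOn (fun v : ℝ => v ^ (-τ)) (Icc ε (μ n)) := fun v hv =>
      (continuousAt_rpow_const v (-τ) (Or.inl (hε.trans_le hv.1).ne')).continuousWithinAt
    exact ((hcont.integrableOn_compact isCompact_Icc).mono_set Ioc_subset_Icc_self
      |>.integrable_indicator measurableSet_Ioc).integrableOn
  rw [Itau, setIntegral_congr_fun measurableSet_Ioi
    fun u hu => Mcount_div_rpow_eq_sum_indicator hS hε.le hu, integral_finsetSum _ hint]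
  refine Finset.sum_congr rfl fun n hn => ?_
  have hεn : ε ≤ μ n := ((hS n).1 hn).le
  rw [setIntegral_indicator measurableSet_Ioc, inter_eq_right.2 Ioc_subset_Ioi_self,
    ← intervalIntegral.integral_of_le hεn, integral_rpow (Or.inr ⟨by contrapose! hτ; linarith,
      by rw [uIcc_of_le hεn]; exact fun h => hε.not_ge h.1⟩)]
  rw [neg_add_eq_sub, ← neg_sub τ 1, div_neg, ← neg_div, neg_sub]

lemma two_mul_Itau_three_sub_Itau_two_div (hlim : Tendsto μ atTop (𝓝 0)) {ε : ℝ}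
    (hε : 0 < ε) : 2 * Itau μ 3 ε - Itau μ 2 ε / ε = criticalFun μ ε := by
  set S := ((finite_setOf_le hlim hε).subset fun n (h : ε < μ n) => h.le).toFinset
  have hS : ∀ n, n ∈ S ↔ ε < μ n := fun n => Set.Finite.mem_toFinset _
  rw [Itau_eq_sum hS hε (by norm_num), Itau_eq_sum hS hε (by norm_num),
    criticalFun_eq_sum hε fun n => (hS n).2, Finset.mul_sum, Finset.sum_div,
    ← Finset.sum_sub_distrib]
  refine Finset.sum_congr rfl fun n hn => ?_
  have hεn : ε < μ n := (hS n).1 hn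
  have hμ : 0 < μ n := hε.trans hεn
  have hdiv : 1 < μ n / ε := (one_lt_div hε).2 hεn
  norm_num [criticalTerm, max_eq_left (sub_nonneg.2 hdiv.le), rpow_neg_one,
    rpow_neg hε.le, rpow_neg hμ.le]
  field_simp
  ring

end CriticalRadius

open CriticalRadius in
/-- For every `σ > 0`, the equation `σ²(2I₃(ε) − I₂(ε)/ε) = 1` has a
unique positive solution, and this solution lies in `(0, μ_*)` where `μ_* = max_n μ_n`. -/
theorem criticalRadius_exists_unique (μ : ℕ → ℝ) (hnn : ∀ n, 0 ≤ μ n)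
    (hlim : Filter.Tendsto μ Filter.atTop (nhds 0))
    (hone : ∃ n : ℕ, μ n ≠ 0) (σ : ℝ) (hσ : 0 < σ) :
    (∃! ε : ℝ, 0 < ε ∧ σ ^ 2 * (2 * Itau μ 3 ε - Itau μ 2 ε / ε) = 1) ∧
    (∀ ε : ℝ, 0 < ε → σ ^ 2 * (2 * Itau μ 3 ε - Itau μ 2 ε / ε) = 1 →
      ε ∈ Set.Ioo 0 (⨆ n, μ n)) := by
  obtain ⟨n₁, hn₁⟩ := hone
  obtain ⟨n₀, hmax⟩ := exists_forall_le_of_tendsto_zero hlim ((hnn n₁).lt_of_ne' hn₁)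
  have h₀ : 0 < μ n₀ := ((hnn n₁).lt_of_ne' hn₁).trans_le (hmax n₁)
  have hsup : ⨆ n, μ n = μ n₀ :=
    le_antisymm (ciSup_le hmax) (le_ciSup ⟨_, forall_mem_range.2 hmax⟩ n₀)
  have hiff : ∀ ε, 0 < ε →
      (σ ^ 2 * (2 * Itau μ 3 ε - Itau μ 2 ε / ε) = 1 ↔ criticalFun μ ε = (σ ^ 2)⁻¹) := by
    intro ε hε
    rw [two_mul_Itau_three_sub_Itau_two_div hlim hε, mul_comm,
      mul_eq_one_iff_eq_inv₀ (by positivity)]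
  have hlt : ∀ ε, 0 < ε → criticalFun μ ε = (σ ^ 2)⁻¹ → ε < μ n₀ := fun ε hε hεσ =>
    not_le.1 fun h => by
      rw [criticalFun_eq_zero hε fun n => (hmax n).trans h] at hεσ
      exact (inv_pos.2 (pow_pos hσ 2)).ne hεσ
  obtain ⟨ε, hε, hεσ⟩ := exists_criticalFun_eq hlim h₀ hmax (inv_pos.2 (pow_pos hσ 2))
  refine ⟨⟨ε, ⟨hε.1, (hiff ε hε.1).2 hεσ⟩, fun δ ⟨hδ, hδσ⟩ => ?_⟩, fun δ hδ hδσ => ?_⟩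
  · have hδσ := (hiff δ hδ).1 hδσ
    exact (criticalFun_strictAntiOn hlim n₀).injOn ⟨hδ, (hlt δ hδ hδσ).le⟩
      ⟨hε.1, hε.2.le⟩ (hδσ.trans hεσ.symm)
  · exact hsup ▸ ⟨hδ, hlt δ hδ ((hiff δ hδ).1 hδσ)⟩
end
end

section
/- Let τ₁, τ₂ ≥ 1 be real numbers and let μ = (μ_n)_{n∈ℕ} be a sequence of nonnegative reals with μ_n → 0 as n → ∞. Then for all ε > 0, I_{τ₁}(ε) = ε^{τ₂−τ₁} · I_{τ₂}(ε) + (τ₂ − τ₁) · ∫_ε^∞ I_{τ₂}(u) · u^{τ₂−τ₁−1} du. -/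
open MeasureTheory ProbabilityTheory Real Set Filter Topology
open scoped ENNReal NNReal

noncomputable section

/-! Since `μ_n → 0`, only finitely many `μ_n` reach `ε`, and for `u ≥ ε` the integral splits as
`I_τ(u) = ∑_n ∫_{(u, μ_n]} t^{-τ} dt`. The identity therefore reduces to one interval `(a, b]`
at a time, where it is an integration by parts: with `σ = τ₂ - τ₁` and
`G(u) = ∫_u^b t^{-τ₂} dt`, `G' = -u^{-τ₂}`, one gets
`σ ∫_a^b G(u) u^{σ-1} du = ∫_a^b t^{-τ₂} (t^σ - a^σ) dt = ∫_a^b t^{-τ₁} dt - a^σ G(a)`. -/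

open intervalIntegral

theorem intervalIntegral.integral_integral_mul_deriv_eq_integral_mul_sub
    {f φ φ' : ℝ → ℝ} {s : Set ℝ} {a b : ℝ}
    (hs : IsOpen s) (hab : uIcc a b ⊆ s) (hf : ContinuousOn f s)
    (hφ : ∀ x ∈ uIcc a b, HasDerivAt φ (φ' x) x) (hφ' : IntervalIntegrable φ' volume a b) :
    ∫ u in a..b, (∫ t in u..b, f t) * φ' u = ∫ t in a..b, f t * (φ t - φ a) := by
  have hG : ∀ x ∈ uIcc a b, HasDerivAt (fun u => ∫ t in u..b, f t) (-f x) x := fun x hx =>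
    integral_hasDerivAt_left ((hf.mono ((uIcc_subset_uIcc_right hx).trans hab)).intervalIntegrable)
      (hf.stronglyMeasurableAtFilter hs x (hab hx)) (hf.continuousAt (hs.mem_nhds (hab hx)))
  have hfi : IntervalIntegrable f volume a b := (hf.mono hab).intervalIntegrable
  have hfφ : IntervalIntegrable (fun t => f t * φ t) volume a b :=
    ((hf.mono hab).mul fun x hx => (hφ x hx).continuousAt.continuousWithinAt).intervalIntegrable
  rw [integral_mul_deriv_eq_deriv_mul hG hφ hfi.neg hφ']
  simp_rw [mul_sub]
  rw [integral_sub hfφ (hfi.mul_const _), integral_mul_const]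
  simp only [integral_same, neg_mul, integral_neg]
  ring

theorem integral_Ioc_rpow_neg_eq {a b : ℝ} (ha : 0 < a) (hab : a ≤ b) (τ₁ τ₂ : ℝ) :
    ∫ u in Ioc a b, u ^ (-τ₁) = a ^ (τ₂ - τ₁) * (∫ u in Ioc a b, u ^ (-τ₂)) +
      (τ₂ - τ₁) * ∫ u in Ioi a, (∫ t in Ioc u b, t ^ (-τ₂)) * u ^ (τ₂ - τ₁ - 1) := by
  set σ := τ₂ - τ₁ with hσ
  have hpos : uIcc a b ⊆ Ioi 0 := by
    rw [uIcc_of_le hab]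
    exact fun x hx => ha.trans_le hx.1
  have hrpow (p : ℝ) : ContinuousOn (fun t : ℝ => t ^ p) (Ioi 0) :=
    continuousOn_id.rpow_const fun x hx => Or.inl (ne_of_gt hx)
  have hparts : ∫ u in a..b, (∫ t in u..b, t ^ (-τ₂)) * (σ * u ^ (σ - 1)) =
      ∫ t in a..b, t ^ (-τ₂) * (t ^ σ - a ^ σ) :=
    integral_integral_mul_deriv_eq_integral_mul_sub isOpen_Ioi hpos (hrpow _)
      (fun x hx => Real.hasDerivAt_rpow_const (Or.inl (ne_of_gt (hpos hx))))
      ((continuousOn_const.mul ((hrpow _).mono hpos)).intervalIntegrable)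
  have htail : ∫ u in Ioi a, (∫ t in Ioc u b, t ^ (-τ₂)) * u ^ (σ - 1) =
      ∫ u in a..b, (∫ t in u..b, t ^ (-τ₂)) * u ^ (σ - 1) := by
    rw [integral_of_le hab, setIntegral_eq_of_subset_of_forall_sdiff_eq_zero measurableSet_Ioi
      Ioc_subset_Ioi_self]
    · exact setIntegral_congr_fun measurableSet_Ioc fun u hu => by rw [integral_of_le hu.2]
    · rintro u ⟨hau, hu⟩
      have hbu : b < u := not_le.mp fun h => hu ⟨hau, h⟩
      simp [Ioc_eq_empty (not_lt.mpr hbu.le)]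
  have hint (p : ℝ) : IntervalIntegrable (fun t : ℝ => t ^ p) volume a b :=
    ((hrpow p).mono hpos).intervalIntegrable
  have hpow : ∀ t ∈ uIcc a b, t ^ (-τ₂) * (t ^ σ - a ^ σ) = t ^ (-τ₁) - a ^ σ * t ^ (-τ₂) := by
    intro t ht
    rw [mul_sub, ← Real.rpow_add (hpos ht), hσ]
    ring_nf
  have hmiddle : σ * ∫ u in a..b, (∫ t in u..b, t ^ (-τ₂)) * u ^ (σ - 1) =
      (∫ t in a..b, t ^ (-τ₁)) - a ^ σ * ∫ t in a..b, t ^ (-τ₂) := by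
    rw [← intervalIntegral.integral_const_mul, ← intervalIntegral.integral_const_mul,
      ← intervalIntegral.integral_sub (hint _) ((hint _).const_mul _)]
    simp_rw [mul_left_comm σ]
    rw [hparts]
    exact integral_congr hpow
  rw [htail, hmiddle, integral_of_le hab, integral_of_le hab]
  ring

theorem integrableOn_Ioi_integral_Ioc_rpow_mul_rpow {a b : ℝ} (ha : 0 < a) (hab : a ≤ b)
    (τ c : ℝ) : IntegrableOn (fun u => (∫ t in Ioc u b, t ^ (-τ)) * u ^ c) (Ioi a) := by
  have hpos : Icc a b ⊆ Ioi 0 := fun x hx => ha.trans_le hx.1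
  have hrpow (p : ℝ) : ContinuousOn (fun t : ℝ => t ^ p) (Icc a b) :=
    continuousOn_id.rpow_const fun x hx => Or.inl (ne_of_gt (hpos hx))
  have hcont : ContinuousOn (fun u => (∫ t in u..b, t ^ (-τ)) * u ^ c) (Icc a b) := by
    refine ContinuousOn.mul ?_ (hrpow c)
    rw [← uIcc_of_le hab]
    refine continuousOn_primitive_interval_left ?_
    rw [uIcc_of_le hab]
    exact (hrpow _).integrableOn_Icc
  rw [← Ioc_union_Ioi_eq_Ioi hab]
  refine IntegrableOn.union ?_ (integrableOn_zero.congr_fun (fun u hu => ?_) measurableSet_Ioi)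
  · exact (hcont.integrableOn_Icc.mono_set Ioc_subset_Icc_self).congr_fun
      (fun u hu => by simp only [integral_of_le hu.2]) measurableSet_Ioc
  · simp [Ioc_eq_empty (not_lt.mpr (le_of_lt (mem_Ioi.mp hu)))]

theorem Filter.Tendsto.finite_setOf_le {μ : ℕ → ℝ}
    (hlim : Tendsto μ atTop (𝓝 0)) {ε : ℝ} (hε : 0 < ε) : {n | ε ≤ μ n}.Finite := by
  have hsmall : ∀ᶠ n in cofinite, μ n < ε :=
    Nat.cofinite_eq_atTop ▸ hlim.eventually (gt_mem_nhds hε)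
  simpa only [not_lt] using eventually_cofinite.mp hsmall

theorem Itau_eq_sum_integral_Ioc {μ : ℕ → ℝ} {ε : ℝ} (hε : 0 < ε) {S : Finset ℕ}
    (hS : ∀ n ∉ S, μ n ≤ ε) (τ : ℝ) :
    Itau μ τ ε = ∑ n ∈ S, ∫ u in Ioc ε (μ n), u ^ (-τ) := by
  have hcount : ∀ u ∈ Ioi ε, Mcount μ u / u ^ τ =
      ∑ n ∈ S, (Iic (μ n)).indicator (fun t => t ^ (-τ)) u := by
    intro u hu
    have hset : {n | u ≤ μ n} = ↑(S.filter fun n => u ≤ μ n) := by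
      ext n
      simp only [mem_ofPred_eq, Finset.coe_filter, iff_and_self]
      exact fun h => by_contra fun hn => (hS n hn).not_gt (lt_of_lt_of_le hu h)
    rw [Mcount, hset, ncard_coe_finset, Finset.card_filter, Nat.cast_sum, Finset.sum_div]
    refine Finset.sum_congr rfl fun n _ => ?_
    by_cases h : u ≤ μ n <;> simp [h, rpow_neg (hε.trans hu).le, div_eq_mul_inv]
  rw [Itau, setIntegral_congr_fun measurableSet_Ioi hcount, MeasureTheory.integral_finsetSum]
  · refine Finset.sum_congr rfl fun n _ => ?_
    rw [setIntegral_indicator measurableSet_Iic, Ioi_inter_Iic]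
  · intro n _
    rw [integrable_indicator_iff measurableSet_Iic, IntegrableOn,
      Measure.restrict_restrict measurableSet_Iic, Iic_inter_Ioi]
    refine ContinuousOn.integrableOn_Icc ?_ |>.mono_set Ioc_subset_Icc_self
    exact continuousOn_id.rpow_const fun x hx => Or.inl (ne_of_gt (hε.trans_le hx.1))

theorem Itau_trans_general (τ₁ τ₂ : ℝ) (μ : ℕ → ℝ)
    (hlim : Filter.Tendsto μ Filter.atTop (nhds 0))
    (ε : ℝ) (hε : 0 < ε) :
    Itau μ τ₁ ε = ε ^ (τ₂ - τ₁) * Itau μ τ₂ ε +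
      (τ₂ - τ₁) * ∫ u in Set.Ioi ε, Itau μ τ₂ u * u ^ (τ₂ - τ₁ - 1) := by
  have hfin := hlim.finite_setOf_le hε
  set S := hfin.toFinset
  have hS : ∀ n ∈ S, ε ≤ μ n := fun n hn => hfin.mem_toFinset.mp hn
  have hSc : ∀ n ∉ S, μ n ≤ ε := fun n hn => (not_le.mp (mt hfin.mem_toFinset.mpr hn)).le
  have hmiddle : ∫ u in Ioi ε, Itau μ τ₂ u * u ^ (τ₂ - τ₁ - 1) =
      ∑ n ∈ S, ∫ u in Ioi ε, (∫ t in Ioc u (μ n), t ^ (-τ₂)) * u ^ (τ₂ - τ₁ - 1) := by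
    rw [← MeasureTheory.integral_finsetSum _ fun n hn =>
      integrableOn_Ioi_integral_Ioc_rpow_mul_rpow hε (hS n hn) _ _]
    refine setIntegral_congr_fun measurableSet_Ioi fun u hu => ?_
    rw [Itau_eq_sum_integral_Ioc (hε.trans hu) fun n hn => (hSc n hn).trans (le_of_lt hu),
      Finset.sum_mul]
  rw [hmiddle, Itau_eq_sum_integral_Ioc hε hSc, Itau_eq_sum_integral_Ioc hε hSc, Finset.mul_sum,
    Finset.mul_sum, ← Finset.sum_add_distrib]
  exact Finset.sum_congr rfl fun n hn => integral_Ioc_rpow_neg_eq hε (hS n hn) τ₁ τ₂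

/-- Relation between type-`τ₁` and type-`τ₂` integrals:
`I_{τ₁}(ε) = ε^{τ₂−τ₁} I_{τ₂}(ε) + (τ₂−τ₁) ∫_ε^∞ I_{τ₂}(u) u^{τ₂−τ₁−1} du`. -/
theorem Itau_trans (τ₁ τ₂ : ℝ) (hτ₁ : 1 ≤ τ₁) (hτ₂ : 1 ≤ τ₂)
    (μ : ℕ → ℝ) (hnn : ∀ n, 0 ≤ μ n)
    (hlim : Filter.Tendsto μ Filter.atTop (nhds 0))
    (ε : ℝ) (hε : 0 < ε) :
    Itau μ τ₁ ε = ε ^ (τ₂ - τ₁) * Itau μ τ₂ ε +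
      (τ₂ - τ₁) * ∫ u in Set.Ioi ε, Itau μ τ₂ u * u ^ (τ₂ - τ₁ - 1) :=
  Itau_trans_general τ₁ τ₂ μ hlim ε hε
end
end

section
/- Let b > 0, let f : (0,∞) → ℝ be integrable on (ε,∞) for every ε > 0 and monotone on some interval (0,δ) with δ > 0, and let g : (0,∞) → (0,∞) be regularly varying at zero with index b. If lim_{ε→0} ( ∫_ε^∞ f(u) du ) / g(ε) = 1, then lim_{ε→0} ε f(ε) / ( b · g(ε) ) = 1. -/
/-!
Write `U t = ∫_t^∞ f`. Regular variation turns `U ε / g ε → L` into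
`(U (a ε) - U ε) / ((1 - a) g ε) → L (a^{-b} - 1) / (1 - a)` for every `a > 0`.
These quotients are `ε / g ε` times the mean of `f` between `a ε` and `ε`, which for
monotone `f` is at most `f ε` when `a < 1` and at least `f ε` when `a > 1`. Letting `a → 1` from either side,
both bounds tend to `L b`, since `-b` is the derivative of `a ↦ a^{-b}` at `1`.
The antitone case follows by applying this to `-f`.
-/

open MeasureTheory ProbabilityTheory Real Set Filter Topology
open scoped ENNReal NNReal

noncomputable section

/-- `g` is regularly varying at zero with index `b`:
`g(λε)/g(ε) → λ^{-b}` as `ε → 0⁺`, for every `λ > 0`. -/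
def RegVaryZero (g : ℝ → ℝ) (b : ℝ) : Prop :=
  ∀ l : ℝ, 0 < l → Filter.Tendsto (fun ε => g (l * ε) / g ε)
    (nhdsWithin 0 (Set.Ioi 0)) (nhds (l ^ (-b)))

theorem MonotoneOn.mul_sub_le_intervalIntegral {f : ℝ → ℝ} {x y : ℝ}
    (hf : MonotoneOn f (Icc x y)) (hxy : x ≤ y) :
    (y - x) * f x ≤ ∫ u in x..y, f u := by
  have hint : IntervalIntegrable f volume x y := by
    apply MonotoneOn.intervalIntegrable
    rwa [uIcc_of_le hxy]
  calc (y - x) * f x = ∫ _ in x..y, f x := by simp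
    _ ≤ ∫ u in x..y, f u :=
      intervalIntegral.integral_mono_on hxy intervalIntegrable_const hint
        fun u hu => hf (left_mem_Icc.2 hxy) hu hu.1

theorem MonotoneOn.intervalIntegral_le_mul_sub {f : ℝ → ℝ} {x y : ℝ}
    (hf : MonotoneOn f (Icc x y)) (hxy : x ≤ y) :
    ∫ u in x..y, f u ≤ (y - x) * f y := by
  have hint : IntervalIntegrable f volume x y := by
    apply MonotoneOn.intervalIntegrable
    rwa [uIcc_of_le hxy]
  calc ∫ u in x..y, f u ≤ ∫ _ in x..y, f y :=
      intervalIntegral.integral_mono_on hxy hint intervalIntegrable_const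
        fun u hu => hf hu (right_mem_Icc.2 hxy) hu.2
    _ = (y - x) * f y := by simp

theorem tendsto_rpow_neg_sub_one_div_one_sub (b : ℝ) :
    Tendsto (fun a : ℝ => (a ^ (-b) - 1) / (1 - a)) (𝓝[≠] 1) (𝓝 b) := by
  have hderiv : HasDerivAt (fun x : ℝ => x ^ (-b)) (-b) 1 := by
    simpa using Real.hasDerivAt_rpow_const (x := 1) (p := -b) (Or.inl one_ne_zero)
  refine (neg_neg b ▸ (hasDerivAt_iff_tendsto_slope.1 hderiv).neg).congr fun a => ?_
  rw [slope_def_field, Real.one_rpow, ← div_neg, neg_sub]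

theorem tendsto_const_mul_nhdsGT_zero {l : ℝ} (hl : 0 < l) :
    Tendsto (fun ε : ℝ => l * ε) (𝓝[>] 0) (𝓝[>] 0) := by
  refine tendsto_nhdsWithin_of_tendsto_nhds_of_eventually_within _ ?_
    (eventually_nhdsWithin_of_forall fun _ hε => mul_pos hl hε)
  simpa using ((continuous_const_mul l).tendsto 0).mono_left nhdsWithin_le_nhds

theorem RegVaryZero.tendsto_comp_mul_div {g F : ℝ → ℝ} {b L : ℝ} (hrv : RegVaryZero g b)
    (hg : ∀ x ∈ Ioi (0 : ℝ), g x ≠ 0)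
    (hF : Tendsto (fun ε => F ε / g ε) (𝓝[>] 0) (𝓝 L)) {l : ℝ} (hl : 0 < l) :
    Tendsto (fun ε => F (l * ε) / g ε) (𝓝[>] 0) (𝓝 (L * l ^ (-b))) := by
  refine ((hF.comp (tendsto_const_mul_nhdsGT_zero hl)).mul (hrv l hl)).congr' ?_
  filter_upwards [self_mem_nhdsWithin] with ε hε
  have hgl := hg _ (mul_pos hl hε)
  simp only [Function.comp_apply]
  field_simp

theorem tendsto_of_squeeze_families {ι α β : Type*} [LinearOrder β] [TopologicalSpace β]
    [OrderTopology β] {l : Filter α} {la lc : Filter ι} [la.NeBot] [lc.NeBot]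
    {φ : ι → α → β} {F : ι → β} {h : α → β} {ℓ : β}
    (hFa : Tendsto F la (𝓝 ℓ)) (hFc : Tendsto F lc (𝓝 ℓ))
    (hφa : ∀ᶠ i in la, Tendsto (φ i) l (𝓝 (F i)) ∧ ∀ᶠ x in l, φ i x ≤ h x)
    (hφc : ∀ᶠ i in lc, Tendsto (φ i) l (𝓝 (F i)) ∧ ∀ᶠ x in l, h x ≤ φ i x) :
    Tendsto h l (𝓝 ℓ) := by
  refine tendsto_order.2 ⟨fun B hB => ?_, fun B hB => ?_⟩
  · obtain ⟨i, hBi, hφi, hle⟩ := ((hFa.eventually_const_lt hB).and hφa).exists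
    filter_upwards [hφi.eventually_const_lt hBi, hle] with x hBx hx
    exact hBx.trans_le hx
  · obtain ⟨i, hBi, hφi, hle⟩ := ((hFc.eventually_lt_const hB).and hφc).exists
    filter_upwards [hφi.eventually_lt_const hBi, hle] with x hBx hx
    exact hx.trans_lt hBx

theorem MonotoneOn.tendsto_mul_div_of_tendsto_integral_Ioi_div {f g : ℝ → ℝ} {b L δ : ℝ}
    (hf : MonotoneOn f (Ioo 0 δ)) (hδ : 0 < δ)
    (hint : ∀ ε : ℝ, 0 < ε → IntegrableOn f (Ioi ε))
    (hg : ∀ x ∈ Ioi (0 : ℝ), 0 < g x) (hrv : RegVaryZero g b)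
    (hlim : Tendsto (fun ε => (∫ u in Ioi ε, f u) / g ε) (𝓝[>] 0) (𝓝 L)) :
    Tendsto (fun ε => ε * f ε / g ε) (𝓝[>] 0) (𝓝 (L * b)) := by
  set U : ℝ → ℝ := fun t => ∫ u in Ioi t, f u
  have hU_bounds : ∀ x y, 0 < x → x ≤ y → y < δ →
      (y - x) * f x ≤ U x - U y ∧ U x - U y ≤ (y - x) * f y := by
    intro x y hx hxy hyδ
    have hmono : MonotoneOn f (Icc x y) :=
      hf.mono fun u hu => ⟨hx.trans_le hu.1, hu.2.trans_lt hyδ⟩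
    rw [intervalIntegral.integral_Ioi_sub_Ioi (hint x hx) hxy]
    exact ⟨hmono.mul_sub_le_intervalIntegral hxy, hmono.intervalIntegral_le_mul_sub hxy⟩
  have hφ : ∀ a, 0 < a → Tendsto (fun ε => (U (a * ε) - U ε) / ((1 - a) * g ε)) (𝓝[>] 0)
      (𝓝 (L * ((a ^ (-b) - 1) / (1 - a)))) := by
    intro a ha
    have := ((hrv.tendsto_comp_mul_div (fun x hx => (hg x hx).ne') hlim ha).sub hlim).div_const
      (1 - a)
    convert this using 1
    · ext ε
      simp only [U]
      rw [← sub_div, div_div, mul_comm (g ε)]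
    · ring_nf
  have hs := (tendsto_rpow_neg_sub_one_div_one_sub b).const_mul L
  refine tendsto_of_squeeze_families (φ := fun a ε => (U (a * ε) - U ε) / ((1 - a) * g ε))
    (hs.mono_left (nhdsLT_le_nhdsNE 1)) (hs.mono_left (nhdsGT_le_nhdsNE 1)) ?_ ?_
  · filter_upwards [Ioo_mem_nhdsLT zero_lt_one] with a ⟨ha0, ha1⟩
    refine ⟨hφ a ha0, ?_⟩
    filter_upwards [Ioo_mem_nhdsGT hδ] with ε ⟨hε0, hεδ⟩
    have hle := (hU_bounds (a * ε) ε (mul_pos ha0 hε0) (by nlinarith) hεδ).2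
    have hgε := hg ε hε0
    rw [div_le_div_iff₀ (by nlinarith) hgε]
    nlinarith [mul_le_mul_of_nonneg_right hle hgε.le]
  · filter_upwards [self_mem_nhdsWithin] with a (ha1 : 1 < a)
    refine ⟨hφ a (by linarith), ?_⟩
    filter_upwards [Ioo_mem_nhdsGT (div_pos hδ (by linarith))] with ε ⟨hε0, hεδ⟩
    have haεδ : a * ε < δ := by rwa [lt_div_iff₀' (by linarith)] at hεδ
    have hle := (hU_bounds ε (a * ε) hε0 (by nlinarith) haεδ).1
    have hgε := hg ε hε0
    rw [← neg_div_neg_eq (U (a * ε) - U ε), neg_sub, ← neg_mul, neg_sub,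
      div_le_div_iff₀ hgε (by nlinarith)]
    nlinarith [mul_le_mul_of_nonneg_right hle hgε.le]

theorem AntitoneOn.tendsto_mul_div_of_tendsto_integral_Ioi_div {f g : ℝ → ℝ} {b L δ : ℝ}
    (hf : AntitoneOn f (Ioo 0 δ)) (hδ : 0 < δ)
    (hint : ∀ ε : ℝ, 0 < ε → IntegrableOn f (Ioi ε))
    (hg : ∀ x ∈ Ioi (0 : ℝ), 0 < g x) (hrv : RegVaryZero g b)
    (hlim : Tendsto (fun ε => (∫ u in Ioi ε, f u) / g ε) (𝓝[>] 0) (𝓝 L)) :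
    Tendsto (fun ε => ε * f ε / g ε) (𝓝[>] 0) (𝓝 (L * b)) := by
  have hneg := hf.neg.tendsto_mul_div_of_tendsto_integral_Ioi_div hδ
    (fun ε hε => (hint ε hε).neg) hg hrv (L := -L)
    (by simpa only [Pi.neg_apply, integral_neg, neg_div] using hlim.neg)
  simpa [neg_div] using hneg.neg

/-- Monotone density theorem at zero: if `f` is eventually monotone
near `0`, `g` is regularly varying at zero with index `b > 0`, and
`(∫_ε^∞ f)/g(ε) → 1`, then `ε f(ε)/(b g(ε)) → 1` as `ε → 0⁺`. -/
theorem monotone_density_at_zero (b : ℝ) (hb : 0 < b) (f g : ℝ → ℝ)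
    (hint : ∀ ε : ℝ, 0 < ε → MeasureTheory.IntegrableOn f (Set.Ioi ε))
    (hmono : ∃ δ : ℝ, 0 < δ ∧
      (MonotoneOn f (Set.Ioo 0 δ) ∨ AntitoneOn f (Set.Ioo 0 δ)))
    (hgpos : ∀ x ∈ Set.Ioi (0:ℝ), 0 < g x)
    (hrv : RegVaryZero g b)
    (hlim : Filter.Tendsto (fun ε => (∫ u in Set.Ioi ε, f u) / g ε)
      (nhdsWithin 0 (Set.Ioi 0)) (nhds 1)) :
    Filter.Tendsto (fun ε => ε * f ε / (b * g ε))
      (nhdsWithin 0 (Set.Ioi 0)) (nhds 1) := by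
  obtain ⟨δ, hδ, hf | hf⟩ := hmono
  all_goals
    have h := (hf.tendsto_mul_div_of_tendsto_integral_Ioi_div hδ hint hgpos hrv hlim).div_const b
    rw [one_mul, div_self hb.ne'] at h
    exact h.congr fun ε => by rw [div_div, mul_comm (g ε)]
end
end

section
/- Let f_1, f_2 : (0,∞) → [0,∞). Suppose that f_1 is asymptotically equivalent to f_2 at 0, meaning: for every δ > 0 there exists ε_δ > 0 such that (1−δ) f_1(ε) ≤ f_2(ε) ≤ (1+δ) f_1(ε) for all ε ∈ (0, ε_δ). Then for every δ ∈ (0,1) there exists σ_δ > 0 such that for all σ ∈ (0, σ_δ), (1−δ) · inf_{ε>0}{ σ² f_1(ε) + ε² } ≤ inf_{ε>0}{ σ² f_2(ε) + ε² } ≤ (1+δ) · inf_{ε>0}{ σ² f_1(ε) + ε² }. -/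
open MeasureTheory ProbabilityTheory Real Set Filter Topology
open scoped ENNReal NNReal

noncomputable section

/-!
A competitor `ε ≥ ε_δ` costs at least `ε_δ²`, whereas `ε_δ / 2` costs
`σ² f₁(ε_δ / 2) + ε_δ² / 4 ≤ ε_δ²` once `σ` is small. So for small `σ` every competitor outside
`(0, ε_δ)` is beaten by `ε_δ / 2`, and on `(0, ε_δ)` the two costs are comparable pointwise
with the factors `1 ∓ δ`.
-/

theorem mul_ciInf_le_ciInf_of_forall_exists {ι ι' : Sort*} [Nonempty ι'] {u : ι → ℝ}
    {v : ι' → ℝ} {c : ℝ} (hc : 0 ≤ c) (hu : BddBelow (range u))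
    (h : ∀ i', ∃ i, c * u i ≤ v i') : c * ⨅ i, u i ≤ ⨅ i', v i' :=
  le_ciInf fun i' ↦
    let ⟨i, hi⟩ := h i'
    (mul_le_mul_of_nonneg_left (ciInf_le hu i) hc).trans hi

theorem exists_pos_forall_mem_Ioo_sq_mul_lt (a : ℝ) {b : ℝ} (hb : 0 < b) :
    ∃ s : ℝ, 0 < s ∧ ∀ σ ∈ Ioo (0 : ℝ) s, σ ^ 2 * a < b := by
  have hcont : Continuous fun σ : ℝ ↦ σ ^ 2 * a := by fun_prop
  have hev : ∀ᶠ σ in 𝓝 (0 : ℝ), σ ^ 2 * a < b :=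
    hcont.tendsto 0 |>.eventually (gt_mem_nhds (by simpa using hb))
  obtain ⟨s, hs, hball⟩ := Metric.eventually_nhds_iff.1 hev
  refine ⟨s, hs, fun σ hσ ↦ hball ?_⟩
  rw [Real.dist_eq, sub_zero, abs_of_pos hσ.1]
  exact hσ.2

def regularizedCost (f : ℝ → ℝ) (σ ε : ℝ) : ℝ := σ ^ 2 * f ε + ε ^ 2

section regularizedCost

variable {f g : ℝ → ℝ} {σ ε c : ℝ}

theorem regularizedCost_nonneg (hf : 0 ≤ f ε) : 0 ≤ regularizedCost f σ ε := by
  unfold regularizedCost; positivity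

theorem bddBelow_range_regularizedCost (hf : ∀ x ∈ Ioi (0 : ℝ), 0 ≤ f x) (σ : ℝ) :
    BddBelow (range fun ε : Ioi (0 : ℝ) ↦ regularizedCost f σ ε) :=
  ⟨0, forall_mem_range.2 fun ε ↦ regularizedCost_nonneg (hf ε ε.2)⟩

theorem mul_regularizedCost_le (hc : c ≤ 1) (h : c * f ε ≤ g ε) :
    c * regularizedCost f σ ε ≤ regularizedCost g σ ε := by
  unfold regularizedCost
  nlinarith [mul_le_mul_of_nonneg_left h (sq_nonneg σ), sq_nonneg ε]

theorem regularizedCost_le_mul (hc : 1 ≤ c) (h : g ε ≤ c * f ε) :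
    regularizedCost g σ ε ≤ c * regularizedCost f σ ε := by
  unfold regularizedCost
  nlinarith [mul_le_mul_of_nonneg_left h (sq_nonneg σ), sq_nonneg ε]

theorem regularizedCost_half_le {r : ℝ} (hσ : σ ^ 2 * f (r / 2) ≤ 3 * r ^ 2 / 4) (hr : 0 ≤ r)
    (hrε : r ≤ ε) (hg : 0 ≤ g ε) : regularizedCost f σ (r / 2) ≤ regularizedCost g σ ε := by
  unfold regularizedCost
  nlinarith [mul_nonneg (sq_nonneg σ) hg]

end regularizedCost

/-- Asymptotic equivalence is preserved by the infimum
`inf_{ε>0}{σ² f(ε) + ε²}`. -/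
theorem infimum_asymp_equiv (f₁ f₂ : ℝ → ℝ)
    (h₁nn : ∀ x ∈ Set.Ioi (0:ℝ), 0 ≤ f₁ x) (h₂nn : ∀ x ∈ Set.Ioi (0:ℝ), 0 ≤ f₂ x)
    (hequiv : ∀ δ : ℝ, 0 < δ → ∃ εδ : ℝ, 0 < εδ ∧ ∀ ε ∈ Set.Ioo (0:ℝ) εδ,
      (1 - δ) * f₁ ε ≤ f₂ ε ∧ f₂ ε ≤ (1 + δ) * f₁ ε) :
    ∀ δ ∈ Set.Ioo (0:ℝ) 1, ∃ σδ : ℝ, 0 < σδ ∧ ∀ σ ∈ Set.Ioo (0:ℝ) σδ,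
      (1 - δ) * (⨅ ε : Set.Ioi (0:ℝ), (σ ^ 2 * f₁ ε + (ε : ℝ) ^ 2))
        ≤ (⨅ ε : Set.Ioi (0:ℝ), (σ ^ 2 * f₂ ε + (ε : ℝ) ^ 2)) ∧
      (⨅ ε : Set.Ioi (0:ℝ), (σ ^ 2 * f₂ ε + (ε : ℝ) ^ 2))
        ≤ (1 + δ) * (⨅ ε : Set.Ioi (0:ℝ), (σ ^ 2 * f₁ ε + (ε : ℝ) ^ 2)) := by
  rintro δ ⟨hδ, hδ₁⟩
  obtain ⟨r, hr, hequiv⟩ := hequiv δ hδ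
  obtain ⟨s, hs, hsmall⟩ :=
    exists_pos_forall_mem_Ioo_sq_mul_lt (f₁ (r / 2)) (by positivity : 0 < 3 * r ^ 2 / 4)
  refine ⟨s, hs, fun σ hσ ↦ ?_⟩
  let half : Ioi (0 : ℝ) := ⟨r / 2, half_pos hr⟩
  have hfar {g : ℝ → ℝ} (hg : ∀ x ∈ Ioi (0 : ℝ), 0 ≤ g x) (ε : Ioi (0 : ℝ)) (hε : r ≤ ε) :
      regularizedCost f₁ σ half ≤ regularizedCost g σ ε :=
    regularizedCost_half_le (hsmall σ hσ).le hr.le hε (hg ε ε.2)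
  constructor
  · refine mul_ciInf_le_ciInf_of_forall_exists (by linarith)
      (bddBelow_range_regularizedCost h₁nn σ) fun ε ↦ ?_
    rcases lt_or_ge (ε : ℝ) r with hε | hε
    · exact ⟨ε, mul_regularizedCost_le (by linarith) (hequiv ε ⟨ε.2, hε⟩).1⟩
    · exact ⟨half, (mul_le_of_le_one_left (regularizedCost_nonneg (h₁nn _ half.2))
        (by linarith)).trans (hfar h₂nn ε hε)⟩
  · rw [Real.mul_iInf_of_nonneg (by linarith)]
    refine ciInf_mono_of_forall_exists (bddBelow_range_regularizedCost h₂nn σ) fun ε ↦ ?_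
    rcases lt_or_ge (ε : ℝ) r with hε | hε
    · exact ⟨ε, regularizedCost_le_mul (by linarith) (hequiv ε ⟨ε.2, hε⟩).2⟩
    · refine ⟨half, (regularizedCost_le_mul (by linarith)
        (hequiv half ⟨half.2, half_lt_self hr⟩).2).trans ?_⟩
      exact mul_le_mul_of_nonneg_left (hfar h₁nn ε hε) (by linarith)
end
end

section
/- Let μ = (μ_n)_{n∈ℕ} be a sequence of nonnegative reals with μ_n → 0 as n → ∞, whose semi-axis-counting function M_μ satisfies the regularity condition (RC) with witness function f. Let x* > 0 be such that M_μ(x*) ≥ 1, and define g(x) := x(1 + 1/M_μ(x)) for x ∈ (0, x*). Then lim_{x→0} f(g(x))/f(x) = 1. -/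
open MeasureTheory ProbabilityTheory Real Set Filter Topology
open scoped ENNReal NNReal

noncomputable section

/-- The elasticity `ρ(t) = (d/dt) ln f(e^{-t})`. -/
def elasticity (f : ℝ → ℝ) : ℝ → ℝ :=
  fun t => deriv (fun s : ℝ => Real.log (f (Real.exp (-s)))) t

/-- `f` is a witness for the regularity condition (RC) for the sequence `μ`:
`f : (0,∞) → (0,∞)` is nonincreasing, `C¹`, `M_μ(x)/f(x) → 1` as `x → 0⁺`, and its
elasticity `ρ` either has a finite limit at `∞`, or tends to `∞` with
`ln ρ(t) = O(ρ(t/2))` and `ρ` nondecreasing on some `(t*,∞)`. -/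
structure IsRCWitness (μ : ℕ → ℝ) (f : ℝ → ℝ) : Prop where
  pos : ∀ x ∈ Set.Ioi (0:ℝ), 0 < f x
  anti : AntitoneOn f (Set.Ioi 0)
  smooth : ContDiffOn ℝ 1 f (Set.Ioi 0)
  equiv : Filter.Tendsto (fun x => Mcount μ x / f x) (nhdsWithin 0 (Set.Ioi 0)) (nhds 1)
  alt : (∃ b : ℝ, Filter.Tendsto (elasticity f) Filter.atTop (nhds b)) ∨
    (Filter.Tendsto (elasticity f) Filter.atTop Filter.atTop ∧
     (fun t => Real.log (elasticity f t)) =O[Filter.atTop] (fun t => elasticity f (t / 2)) ∧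
     ∃ tStar : ℝ, 0 < tStar ∧ MonotoneOn (elasticity f) (Set.Ioi tStar))

/-- The regularity condition (RC). -/
def SatisfiesRC (μ : ℕ → ℝ) : Prop := ∃ f : ℝ → ℝ, IsRCWitness μ f

/-!
Put `F(t) = ln f(e^{-t})`, so that `F' = ρ ≥ 0` and `f(g(x))/f(x) = exp (F(t - δ) - F(t))` with
`t = -ln x` and `δ = ln(1 + 1/M_μ(x)) ≤ 1/M_μ(x) ~ e^{-F(t)}`. By the mean value theorem
`0 ≤ F(t) - F(t - δ) ≤ δ · sup_{[t-δ, t]} ρ`. If `F` is bounded it converges and the difference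
tends to `0`. Otherwise `F → ∞`, so `δ → 0`; in case (i) `ρ` is eventually bounded, and in
case (ii) `ρ` is eventually monotone, so the bound is `≲ ρ(t) e^{-F(t)}`. That this tends to `0`
follows from `ln ρ(T) = O(ρ(T/2))` and `ρ(T/2) · T/2 ≤ F(T) - F(T/2)`, which give
`ln ρ(T) ≤ F(T)/2` for large `T`.
-/

open Asymptotics

def logProfile (f : ℝ → ℝ) (t : ℝ) : ℝ := log (f (exp (-t)))

def IsRCElasticity (ρ : ℝ → ℝ) : Prop :=
  (∃ b : ℝ, Tendsto ρ atTop (𝓝 b)) ∨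
    (Tendsto ρ atTop atTop ∧ (fun t => log (ρ t)) =O[atTop] (fun t => ρ (t / 2)) ∧
      ∃ tStar : ℝ, 0 < tStar ∧ MonotoneOn ρ (Ioi tStar))

theorem IsRCWitness.isRCElasticity {μ : ℕ → ℝ} {f : ℝ → ℝ} (hf : IsRCWitness μ f) :
    IsRCElasticity (deriv (logProfile f)) :=
  hf.alt

section logProfile

variable {f : ℝ → ℝ}

theorem differentiable_logProfile (hpos : ∀ x ∈ Ioi (0 : ℝ), 0 < f x)
    (hdiff : DifferentiableOn ℝ f (Ioi 0)) : Differentiable ℝ (logProfile f) := fun t =>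
  ((hdiff.differentiableAt (isOpen_Ioi.mem_nhds (exp_pos (-t)))).comp t
    differentiableAt_id.neg.exp).log (hpos _ (exp_pos _)).ne'

theorem monotone_logProfile (hpos : ∀ x ∈ Ioi (0 : ℝ), 0 < f x)
    (hanti : AntitoneOn f (Ioi 0)) : Monotone (logProfile f) := fun _ _ hst =>
  log_le_log (hpos _ (exp_pos _)) <|
    hanti (exp_pos _) (exp_pos _) (exp_le_exp.2 (neg_le_neg hst))

theorem exp_logProfile_neg_log (hpos : ∀ x ∈ Ioi (0 : ℝ), 0 < f x) {x : ℝ} (hx : 0 < x) :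
    exp (logProfile f (-log x)) = f x := by
  rw [logProfile, neg_neg, exp_log hx, exp_log (hpos x hx)]

theorem div_eq_exp_logProfile_sub (hpos : ∀ x ∈ Ioi (0 : ℝ), 0 < f x) {x c : ℝ} (hx : 0 < x)
    (hc : 0 < c) :
    f (x * c) / f x = exp (logProfile f (-log x - log c) - logProfile f (-log x)) := by
  rw [exp_sub, ← neg_add', ← log_mul hx.ne' hc.ne', exp_logProfile_neg_log hpos (mul_pos hx hc),
    exp_logProfile_neg_log hpos hx]

end logProfile

section DerivMonotone

variable {F : ℝ → ℝ} {a : ℝ}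

theorem sub_le_deriv_mul_sub (hdiff : Differentiable ℝ F) (hmono : MonotoneOn (deriv F) (Ioi a))
    {x y : ℝ} (hax : a < x) (hxy : x ≤ y) : F y - F x ≤ deriv F y * (y - x) :=
  (convex_Icc x y).image_sub_le_mul_sub_of_deriv_le hdiff.continuous.continuousOn
    hdiff.differentiableOn (fun ξ hξ => by
      rw [interior_Icc] at hξ
      exact hmono (hax.trans hξ.1) (hax.trans_le hxy) hξ.2.le)
    x (left_mem_Icc.2 hxy) y (right_mem_Icc.2 hxy) hxy

theorem deriv_mul_sub_le_sub (hdiff : Differentiable ℝ F) (hmono : MonotoneOn (deriv F) (Ioi a))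
    {x y : ℝ} (hax : a < x) (hxy : x ≤ y) : deriv F x * (y - x) ≤ F y - F x :=
  (convex_Icc x y).mul_sub_le_image_sub_of_le_deriv hdiff.continuous.continuousOn
    hdiff.differentiableOn (fun ξ hξ => by
      rw [interior_Icc] at hξ
      exact hmono hax (hax.trans hξ.1) hξ.1.le)
    x (left_mem_Icc.2 hxy) y (right_mem_Icc.2 hxy) hxy

theorem eventually_log_deriv_le_half (hF : Monotone F) (hdiff : Differentiable ℝ F)
    (hFtop : Tendsto F atTop atTop)
    (hO : (fun t => log (deriv F t)) =O[atTop] fun t => deriv F (t / 2))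
    (hmono : MonotoneOn (deriv F) (Ioi a)) :
    ∀ᶠ T in atTop, log (deriv F T) ≤ F T / 2 := by
  obtain ⟨c, hc0, hc⟩ := hO.exists_pos
  filter_upwards [hc.bound, eventually_ge_atTop (2 * (a + 1)), eventually_ge_atTop (8 * c),
    hFtop.eventually_ge_atTop |F (a + 1)|] with T hbound hTa hTc hFT
  have hlog : log (deriv F T) ≤ c * deriv F (T / 2) := by
    have := (le_abs_self _).trans hbound
    rwa [norm_of_nonneg hF.deriv_nonneg] at this
  have hhalf : deriv F (T / 2) * (T / 2) ≤ 2 * F T := by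
    have hmvt :=
      deriv_mul_sub_le_sub hdiff hmono (x := T / 2) (y := T) (by linarith) (by linarith)
    have hK := hF (show a + 1 ≤ T / 2 by linarith)
    have := neg_abs_le (F (a + 1))
    rw [show T - T / 2 = T / 2 by ring] at hmvt
    linarith
  have hscaled : c * deriv F (T / 2) * (T / 2) ≤ F T / 2 * (T / 2) := by
    nlinarith [mul_le_mul_of_nonneg_left hhalf hc0.le, mul_le_mul_of_nonneg_right hTc
      (show 0 ≤ F T by linarith [abs_nonneg (F (a + 1))])]
  exact hlog.trans (le_of_mul_le_mul_right hscaled (by linarith))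

theorem tendsto_deriv_mul_exp_neg (hF : Monotone F) (hdiff : Differentiable ℝ F)
    (hFtop : Tendsto F atTop atTop)
    (hO : (fun t => log (deriv F t)) =O[atTop] fun t => deriv F (t / 2))
    (hmono : MonotoneOn (deriv F) (Ioi a)) :
    Tendsto (fun T => deriv F T * exp (-F T)) atTop (𝓝 0) := by
  refine tendsto_of_tendsto_of_tendsto_of_le_of_le' tendsto_const_nhds
    (tendsto_exp_neg_atTop_nhds_zero.comp (hFtop.atTop_div_const two_pos)) ?_ ?_
  · exact Eventually.of_forall fun T => mul_nonneg hF.deriv_nonneg (exp_pos _).le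
  · filter_upwards [eventually_log_deriv_le_half hF hdiff hFtop hO hmono] with T hT
    calc deriv F T * exp (-F T) ≤ exp (F T / 2) * exp (-F T) :=
          mul_le_mul_of_nonneg_right ((le_exp_log _).trans (exp_le_exp.2 hT)) (exp_pos _).le
      _ = exp (-(F T / 2)) := by rw [← exp_add]; ring_nf

end DerivMonotone

section Perturbation

variable {α : Type*} {l : Filter α} {F : ℝ → ℝ} {t δ : α → ℝ}

theorem tendsto_sub_of_isBigO_exp_neg (hF : Monotone F) (ht : Tendsto t l atTop)
    (hδ : δ =O[l] fun x => exp (-F (t x))) : Tendsto (fun x => t x - δ x) l atTop := by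
  obtain ⟨c, hc0, hc⟩ := hδ.exists_pos
  refine tendsto_atTop_mono' l ?_ (tendsto_atTop_add_const_right l (-(c * exp (-F 0))) ht)
  filter_upwards [hc.bound, ht.eventually_ge_atTop 0] with x hx ht0
  rw [norm_of_nonneg (exp_pos _).le] at hx
  have hexp : exp (-F (t x)) ≤ exp (-F 0) := exp_le_exp.2 (neg_le_neg (hF ht0))
  linarith [le_norm_self (δ x), mul_le_mul_of_nonneg_left hexp hc0.le]

theorem tendsto_of_isBigO_exp_neg (hFtop : Tendsto F atTop atTop) (ht : Tendsto t l atTop)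
    (hδ : δ =O[l] fun x => exp (-F (t x))) : Tendsto δ l (𝓝 0) :=
  hδ.trans_tendsto (tendsto_exp_neg_atTop_nhds_zero.comp (hFtop.comp ht))

theorem tendsto_comp_sub_sub_comp_of_le (hF : Monotone F) (hδ0 : ∀ᶠ x in l, 0 ≤ δ x)
    {R : α → ℝ} (hR : Tendsto R l (𝓝 0)) (hle : ∀ᶠ x in l, F (t x) - F (t x - δ x) ≤ R x) :
    Tendsto (fun x => F (t x - δ x) - F (t x)) l (𝓝 0) := by
  refine tendsto_of_tendsto_of_tendsto_of_le_of_le' (by simpa using hR.neg) tendsto_const_nhds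
    ?_ ?_
  · filter_upwards [hle] with x hx
    linarith
  · filter_upwards [hδ0] with x hx
    linarith [hF (show t x - δ x ≤ t x by linarith)]

theorem Monotone.tendsto_comp_sub_sub_comp (hF : Monotone F) (hdiff : Differentiable ℝ F)
    (hρ : IsRCElasticity (deriv F)) (ht : Tendsto t l atTop) (hδ0 : ∀ᶠ x in l, 0 ≤ δ x)
    (hδ : δ =O[l] fun x => exp (-F (t x))) :
    Tendsto (fun x => F (t x - δ x) - F (t x)) l (𝓝 0) := by
  have hs := tendsto_sub_of_isBigO_exp_neg hF ht hδ
  by_cases hbdd : BddAbove (range F)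
  · have hL := tendsto_atTop_ciSup hF hbdd
    simpa using (hL.comp hs).sub (hL.comp ht)
  have hFtop : Tendsto F atTop atTop := tendsto_atTop_atTop_of_monotone' hF hbdd
  have hδ_zero := tendsto_of_isBigO_exp_neg hFtop ht hδ
  rcases hρ with ⟨b, hb⟩ | ⟨-, hO, tStar, -, hmono⟩
  · obtain ⟨T₀, hT₀⟩ := eventually_atTop.1 (hb.eventually (eventually_le_nhds (lt_add_one b)))
    have hR : Tendsto (fun x => (b + 1) * δ x) l (𝓝 0) := by
      simpa using hδ_zero.const_mul (b + 1)
    refine tendsto_comp_sub_sub_comp_of_le hF hδ0 hR ?_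
    filter_upwards [hs.eventually_ge_atTop T₀, hδ0] with x hx hx0
    have := (convex_Ici T₀).image_sub_le_mul_sub_of_deriv_le hdiff.continuous.continuousOn
      hdiff.differentiableOn (fun ξ hξ => hT₀ ξ (interior_subset hξ)) _ hx (t x)
      (hx.trans (by linarith)) (by linarith)
    rwa [sub_sub_cancel] at this
  · have hR : Tendsto (fun x => deriv F (t x) * δ x) l (𝓝 0) :=
      ((isBigO_refl (fun x => deriv F (t x)) l).mul hδ).trans_tendsto
        ((tendsto_deriv_mul_exp_neg hF hdiff hFtop hO hmono).comp ht)
    refine tendsto_comp_sub_sub_comp_of_le hF hδ0 hR ?_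
    filter_upwards [hs.eventually_gt_atTop tStar, hδ0] with x hx hx0
    have := sub_le_deriv_mul_sub hdiff hmono hx (by linarith : t x - δ x ≤ t x)
    rwa [sub_sub_cancel] at this

end Perturbation

theorem log_one_add_one_div_mem_Icc {m : ℝ} (hm : 0 ≤ m) : log (1 + 1 / m) ∈ Icc 0 m⁻¹ := by
  have h1 : 1 ≤ 1 + 1 / m := le_add_of_nonneg_right (by positivity)
  refine ⟨log_nonneg h1, ?_⟩
  linarith [log_le_sub_one_of_pos (zero_lt_one.trans_le h1), one_div m]

theorem IsRCWitness.isBigO_log_one_add_one_div {μ : ℕ → ℝ} {f : ℝ → ℝ} (hf : IsRCWitness μ f) :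
    (fun x => log (1 + 1 / Mcount μ x)) =O[𝓝[>] 0] fun x => exp (-logProfile f (-log x)) := by
  have hM : ∀ x, 0 ≤ Mcount μ x := fun x => Nat.cast_nonneg _
  have hδ : (fun x => log (1 + 1 / Mcount μ x)) =O[𝓝[>] 0] fun x => (Mcount μ x)⁻¹ :=
    IsBigO.of_bound 1 <| Eventually.of_forall fun x => by
      obtain ⟨h0, h1⟩ := log_one_add_one_div_mem_Icc (hM x)
      rwa [one_mul, norm_of_nonneg h0, norm_of_nonneg (inv_nonneg.2 (hM x))]
  have hinv : (fun x => (f x)⁻¹) =ᶠ[𝓝[>] 0] fun x => exp (-logProfile f (-log x)) := by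
    filter_upwards [self_mem_nhdsWithin] with x hx
    rw [exp_neg, exp_logProfile_neg_log hf.pos hx]
  exact (hδ.trans (isEquivalent_of_tendsto_one (u := Mcount μ) hf.equiv).inv.isBigO
    ).trans_eventuallyEq hinv

theorem rc_witness_perturbation_general (μ : ℕ → ℝ) (f : ℝ → ℝ) (hf : IsRCWitness μ f) :
    Filter.Tendsto (fun x => f (x * (1 + 1 / Mcount μ x)) / f x)
      (nhdsWithin 0 (Set.Ioi 0)) (nhds 1) := by
  have hM : ∀ x, 0 ≤ Mcount μ x := fun x => Nat.cast_nonneg _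
  have hkey := (monotone_logProfile hf.pos hf.anti).tendsto_comp_sub_sub_comp
    (differentiable_logProfile hf.pos (hf.smooth.differentiableOn one_ne_zero))
    hf.isRCElasticity (t := fun x => -log x)
    (tendsto_neg_atBot_atTop.comp tendsto_log_nhdsGT_zero)
    (Eventually.of_forall fun x => (log_one_add_one_div_mem_Icc (hM x)).1)
    hf.isBigO_log_one_add_one_div
  have hexp := (continuous_exp.tendsto 0).comp hkey
  rw [exp_zero] at hexp
  refine hexp.congr' ?_
  filter_upwards [self_mem_nhdsWithin] with x hx
  have hc : 0 < 1 + 1 / Mcount μ x := by have := hM x; positivity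
  exact (div_eq_exp_logProfile_sub hf.pos hx hc).symm

/-- If `f` is a witness for (RC) and `g(x) = x(1 + 1/M_μ(x))`, then
`f(g(x))/f(x) → 1` as `x → 0⁺`. -/
theorem rc_witness_perturbation (μ : ℕ → ℝ) (hnn : ∀ n, 0 ≤ μ n)
    (hlim : Filter.Tendsto μ Filter.atTop (nhds 0))
    (f : ℝ → ℝ) (hf : IsRCWitness μ f)
    (xstar : ℝ) (hxstar : 0 < xstar) (hMx : 1 ≤ Mcount μ xstar) :
    Filter.Tendsto (fun x => f (x * (1 + 1 / Mcount μ x)) / f x)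
      (nhdsWithin 0 (Set.Ioi 0)) (nhds 1) :=
  rc_witness_perturbation_general μ f hf
end
end
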